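/- Let (R, P) be a CBR representation of a choice function C. Then: (i) if C displays a weak (xy) reversal due to z, then x R y, y P x, and y R z; (ii) if C displays a strong (xy) reversal due to z, then ¬(x R y), x P y, z R x, and y P z. -/
import Mathlib


/-- A rationale is an asymmetric binary relation. -/
def Asym {X : Type*} (R : X → X → Prop) : Prop := ∀ a b, R a b → ¬ R b a

/-- Transitivity of a relation. -/
def Tran {X : Type*} (R : X → X → Prop) : Prop := ∀ a b c, R a b → R b c → R a c

/-- Completeness of a relation: any two distinct elements are related one way or the other. -/
def Comp {X : Type*} (R : X → X → Prop) : Prop := ∀ a b : X, a ≠ b → R a b ∨ R b a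

/-- `x ∈ min(S, R)`: some element of `S` dominates `x` and `x` dominates no element of `S`. -/
def MinSet {X : Type*} (R : X → X → Prop) (S : Finset X) (x : X) : Prop :=
  x ∈ S ∧ (∃ z ∈ S, R z x) ∧ ∀ z ∈ S, ¬ R x z

/-- `x ∈ max(S, R)`: no element of `S` dominates `x`. -/
def MaxSet {X : Type*} (R : X → X → Prop) (S : Finset X) (x : X) : Prop :=
  x ∈ S ∧ ∀ z ∈ S, ¬ R z x

/-- `x ∈ S \ min(S, R)`: `x` survives the first-stage rejection. -/
def Short {X : Type*} (R : X → X → Prop) (S : Finset X) (x : X) : Prop :=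
  x ∈ S ∧ ¬ MinSet R S x

/-- `C` is a choice function: on every nonempty menu it picks an element of the menu. -/
def IsChoice {X : Type*} (C : Finset X → X) : Prop :=
  ∀ S : Finset X, S.Nonempty → C S ∈ S

/-- `(R, P)` is a CBR representation of `C`: `R` is a transitive rationale, `P` a complete
rationale, and for every nonempty menu `S`, `C S` is the unique element of
`max(S \ min(S,R), P)`. -/
def CBR {X : Type*} (C : Finset X → X) (R P : X → X → Prop) : Prop :=
  Asym R ∧ Tran R ∧ Asym P ∧ Comp P ∧
    ∀ S : Finset X, S.Nonempty →
      ∀ x : X, (Short R S x ∧ ∀ z : X, Short R S z → ¬ P z x) ↔ x = C S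

/-- The pairwise revealed relation `x ≻_c y`. -/
def pc {X : Type*} [DecidableEq X] (C : Finset X → X) (x y : X) : Prop :=
  x ≠ y ∧ C {x, y} = x

/-- `C` displays an `(x y)` reversal due to `z` on the menu `S`. -/
def Rev {X : Type*} [DecidableEq X] (C : Finset X → X) (x y z : X) (S : Finset X) : Prop :=
  x ≠ y ∧ x ∈ S ∧ y ∈ S ∧ z ∉ S ∧ C {x, y} = x ∧ C S = x ∧ C (insert z S) = y

/-- A weak `(x y)` reversal due to `z` on `S`: additionally `x ≻_c z`. -/
def WeakRev {X : Type*} [DecidableEq X] (C : Finset X → X) (x y z : X) (S : Finset X) : Prop :=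
  Rev C x y z S ∧ pc C x z

/-- A strong `(x y)` reversal due to `z` on `S`: additionally `z ≻_c x`. -/
def StrongRev {X : Type*} [DecidableEq X] (C : Finset X → X) (x y z : X) (S : Finset X) : Prop :=
  Rev C x y z S ∧ pc C z x

/-- The revealed first-stage relation `x ≻_R y`. -/
def RRel {X : Type*} [DecidableEq X] (C : Finset X → X) (x y : X) : Prop :=
  (∃ w S, WeakRev C x y w S) ∨ (∃ w S, WeakRev C w x y S) ∨ (∃ w S, StrongRev C y w x S)

/-- The transitive closure `≻̄_R` of `≻_R`. -/
def RBar {X : Type*} [DecidableEq X] (C : Finset X → X) : X → X → Prop :=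
  Relation.TransGen (RRel C)

/-- Axiom NC (Never Chosen). -/
def NC {X : Type*} [DecidableEq X] (C : Finset X → X) : Prop :=
  ∀ S : Finset X, ∀ x ∈ S, (∃ y ∈ S, y ≠ x) →
    (∀ y ∈ S, y ≠ x → C {x, y} ≠ x) → C S ≠ x

/-- Axiom WCC* (Weak Contraction Consistency*). -/
def WCCstar {X : Type*} [DecidableEq X] (C : Finset X → X) : Prop :=
  ∀ (x y : X) (S : Finset X), x ≠ y → {x, y} ⊂ S → (C S = x ∨ C S = y) →
    ∃ z ∈ S, z ≠ x ∧ z ≠ y ∧ (C (S.erase z) = x ∨ C (S.erase z) = y)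

/-- Axiom NBC* (No Binary Cycles*): any `≻_R`-chain from `x₁` to `xₙ` yields `x₁ ≻_c xₙ`. -/
def NBCstar {X : Type*} [DecidableEq X] (C : Finset X → X) : Prop :=
  ∀ x y : X, RBar C x y → pc C x y

/-- Axiom R-WARP (Reject-WARP). -/
def RWARP {X : Type*} [DecidableEq X] (C : Finset X → X) : Prop :=
  ∀ (x y : X) (S S' : Finset X), x ≠ y →
    x ∈ S → y ∈ S → x ∈ S' → y ∈ S' →
    ¬ MinSet (RBar C) S y → C S = x → ¬ MinSet (RBar C) S' x → C S' ≠ y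

section Aux
variable {X : Type*} [DecidableEq X]

lemma cbr_spec {C : Finset X → X} {R P : X → X → Prop} (h : CBR C R P)
    {S : Finset X} (hne : S.Nonempty) {x : X} (hx : C S = x) :
    Short R S x ∧ ∀ w, Short R S w → ¬ P w x :=
  (h.2.2.2.2 S hne x).mpr hx.symm

lemma pc_not_R {C : Finset X → X} {R P : X → X → Prop} (h : CBR C R P)
    {a b : X} (hab : a ≠ b) (hc : C ({a, b} : Finset X) = a) : ¬ R b a := by
  intro hR
  have hne : ({a, b} : Finset X).Nonempty := ⟨a, by simp⟩
  refine (cbr_spec h hne hc).1.2 ⟨by simp, ⟨b, by simp, hR⟩, ?_⟩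
  intro w hw
  rcases Finset.mem_insert.mp hw with rfl | hw
  · exact fun h' => h.1 _ _ h' h'
  · rw [Finset.mem_singleton] at hw; subst hw
    exact h.1 _ _ hR

lemma pc_P {C : Finset X → X} {R P : X → X → Prop} (h : CBR C R P)
    {a b : X} (hab : a ≠ b) (hc : C ({a, b} : Finset X) = a) (hnR : ¬ R a b) : P a b := by
  have hne : ({a, b} : Finset X).Nonempty := ⟨a, by simp⟩
  have hs := (cbr_spec h hne hc).2 b
  have hShort : Short R ({a, b} : Finset X) b := by
    refine ⟨by simp, fun hmin => ?_⟩
    obtain ⟨_, ⟨w, hw, hwb⟩, _⟩ := hmin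
    rcases Finset.mem_insert.mp hw with rfl | hw
    · exact hnR hwb
    · rw [Finset.mem_singleton] at hw; subst hw; exact h.1 _ _ hwb hwb
  rcases h.2.2.2.1 a b hab with hp | hp
  · exact hp
  · exact absurd hp (hs hShort)

lemma short_insert {R : X → X → Prop} {S : Finset X} {x z : X}
    (hx : Short R S x) (hnz : ¬ R z x) : Short R (insert z S) x := by
  refine ⟨Finset.mem_insert_of_mem hx.1, fun hmin => ?_⟩
  obtain ⟨_, ⟨w, hwT, hwx⟩, hnd⟩ := hmin
  refine hx.2 ⟨hx.1, ⟨w, ?_, hwx⟩, fun u hu => hnd u (Finset.mem_insert_of_mem hu)⟩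
  rcases Finset.mem_insert.mp hwT with rfl | hwS
  · exact absurd hwx hnz
  · exact hwS

lemma short_dominates {R : X → X → Prop} {T : Finset X} {y : X}
    (hS : Short R T y) (hd : ∃ w ∈ T, R w y) : ∃ w ∈ T, R y w := by
  by_contra h'
  push_neg at h'
  exact hS.2 ⟨hS.1, hd, h'⟩

end Aux

/-- Let `(R, P)` be a CBR representation of `C`. A weak `(x y)` reversal due to `z` reveals
`x R y`, `y P x`, and `y R z`; a strong `(x y)` reversal due to `z` reveals `¬ x R y`,
`x P y`, `z R x`, and `y P z`. -/
theorem reversal_revelation {X : Type*} [Fintype X] [DecidableEq X]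
    (C : Finset X → X) (hC : IsChoice C)
    (R P : X → X → Prop) (hrep : CBR C R P) :
    (∀ (x y z : X) (S : Finset X), WeakRev C x y z S → R x y ∧ P y x ∧ R y z) ∧
    (∀ (x y z : X) (S : Finset X), StrongRev C x y z S →
      ¬ R x y ∧ P x y ∧ R z x ∧ P y z) := by
  constructor
  · rintro x y z S ⟨⟨hxy, hxS, hyS, hzS, hpair, hCS, hCT⟩, hxz_ne, hxzc⟩
    have hSne : S.Nonempty := ⟨x, hxS⟩
    have hTne : (insert z S).Nonempty := ⟨y, Finset.mem_insert_of_mem hyS⟩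
    have hS := cbr_spec hrep hSne hCS
    have hT := cbr_spec hrep hTne hCT
    have hnRzx : ¬ R z x := pc_not_R hrep hxz_ne hxzc
    have hxT : Short R (insert z S) x := short_insert hS.1 hnRzx
    have hPyx : P y x := (hrep.2.2.2.1 x y hxy).resolve_left (hT.2 x hxT)
    have hRxy : R x y := by
      by_contra hn
      exact hrep.2.2.1 _ _ (pc_P hrep hxy hpair hn) hPyx
    have hRyz : R y z := by
      obtain ⟨w, hwT, hyw⟩ :=
        short_dominates hT.1 ⟨x, Finset.mem_insert_of_mem hxS, hRxy⟩
      rcases Finset.mem_insert.mp hwT with rfl | hwS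
      · exact hyw
      · exact absurd hPyx (hS.2 y ⟨hyS, fun hmin => hmin.2.2 w hwS hyw⟩)
    exact ⟨hRxy, hPyx, hRyz⟩
  · rintro x y z S ⟨⟨hxy, hxS, hyS, hzS, hpair, hCS, hCT⟩, hzx_ne, hzxc⟩
    have hSne : S.Nonempty := ⟨x, hxS⟩
    have hTne : (insert z S).Nonempty := ⟨y, Finset.mem_insert_of_mem hyS⟩
    have hS := cbr_spec hrep hSne hCS
    have hT := cbr_spec hrep hTne hCT
    have hyz_ne : y ≠ z := fun h => hzS (h ▸ hyS)
    have hRzx : R z x := by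
      by_contra hnRzx
      have hnRxz : ¬ R x z := pc_not_R hrep hzx_ne hzxc
      have hxT : Short R (insert z S) x := short_insert hS.1 hnRzx
      have hPyx : P y x := (hrep.2.2.2.1 x y hxy).resolve_left (hT.2 x hxT)
      have hRxy : R x y := by
        by_contra hn
        exact hrep.2.2.1 _ _ (pc_P hrep hxy hpair hn) hPyx
      obtain ⟨w, hwT, hyw⟩ :=
        short_dominates hT.1 ⟨x, Finset.mem_insert_of_mem hxS, hRxy⟩
      rcases Finset.mem_insert.mp hwT with rfl | hwS
      · exact hnRxz (hrep.2.1 _ _ _ hRxy hyw)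
      · exact absurd hPyx (hS.2 y ⟨hyS, fun hmin => hmin.2.2 w hwS hyw⟩)
    have hnRxy : ¬ R x y := by
      intro hRxy
      have hRzy : R z y := hrep.2.1 _ _ _ hRzx hRxy
      obtain ⟨w, hwT, hyw⟩ :=
        short_dominates hT.1 ⟨z, Finset.mem_insert_self _ _, hRzy⟩
      rcases Finset.mem_insert.mp hwT with rfl | hwS
      · exact hrep.1 _ _ hRzy hyw
      · have hnPyx : ¬ P y x := hS.2 y ⟨hyS, fun hmin => hmin.2.2 w hwS hyw⟩
        have hPxy : P x y := (hrep.2.2.2.1 y x hxy.symm).resolve_left hnPyx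
        have hxT : Short R (insert z S) x :=
          ⟨Finset.mem_insert_of_mem hxS,
            fun hmin => hmin.2.2 y (Finset.mem_insert_of_mem hyS) hRxy⟩
        exact hT.2 x hxT hPxy
    have hPxy : P x y := pc_P hrep hxy hpair hnRxy
    have hzT : Short R (insert z S) z :=
      ⟨Finset.mem_insert_self _ _,
        fun hmin => hmin.2.2 x (Finset.mem_insert_of_mem hxS) hRzx⟩
    have hPyz : P y z := (hrep.2.2.2.1 y z hyz_ne).resolve_right (hT.2 z hzT)
    exact ⟨hnRxy, hPxy, hRzx, hPyz⟩
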